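/- arXiv:1708.03643 — 3 statements merged into one kernel-verified Lean document; each statement's English description precedes it below -/
import Mathlib

section
/- Let $Y_1,\dots,Y_M$ be independent Bernoulli random variables with parameters $p_1,\dots,p_M$ respectively, where each $p_i \in [\epsilon_1, 1]$ for some $\epsilon_1 \in (0,1)$. Then for every $r \in (0,1)$, $\mathbf{P}(\sum_{i=1}^M Y_i \ge rM) \le (1/\epsilon_1)^{M(1-r)} \, 2^M \prod_{i=1}^M p_i$. -/
open MeasureTheory ProbabilityTheory Finset

theorem stmt0 {Ω : Type*} [MeasurableSpace Ω] (μ : Measure Ω) [IsProbabilityMeasure μ]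
    (M : ℕ) (hM : 1 ≤ M) (A : Fin M → Set Ω) (hmeas : ∀ i, MeasurableSet (A i))
    (hind : iIndepSet A μ)
    (p : Fin M → ℝ) (hp : ∀ i, (μ (A i)).toReal = p i)
    (ε₁ : ℝ) (hε₁ : 0 < ε₁) (hε₁' : ε₁ < 1)
    (hpi : ∀ i, ε₁ ≤ p i ∧ p i ≤ 1)
    (r : ℝ) (hr : 0 < r) (hr' : r < 1) :
    (μ {ω | r * M ≤ ∑ i, (A i).indicator (fun _ => (1 : ℝ)) ω}).toReal ≤
      (1 / ε₁) ^ ((M : ℝ) * (1 - r)) * 2 ^ M * ∏ i, p i := by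
  classical
  set C : ℝ := (1 / ε₁) ^ ((M : ℝ) * (1 - r)) * ∏ i, p i with hC
  set F : Finset (Finset (Fin M)) :=
    Finset.univ.filter (fun S => r * M ≤ (S.card : ℝ)) with hF
  -- inclusion into the union
  have hsub : {ω | r * M ≤ ∑ i, (A i).indicator (fun _ => (1 : ℝ)) ω} ⊆
      ⋃ S ∈ F, ⋂ i ∈ S, A i := by
    intro ω hω
    simp only [Set.mem_setOf_eq] at hω
    have hsum : ∑ i, (A i).indicator (fun _ => (1 : ℝ)) ω =
        ((Finset.univ.filter (fun i => ω ∈ A i)).card : ℝ) := by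
      rw [← Finset.sum_boole]
      refine Finset.sum_congr rfl fun i _ => ?_
      simp [Set.indicator_apply]
    rw [hsum] at hω
    refine Set.mem_biUnion (show Finset.univ.filter (fun i => ω ∈ A i) ∈ F from ?_) ?_
    · simp [hF, hω]
    · simp only [Set.mem_iInter]
      intro i hi
      simpa using (Finset.mem_filter.mp hi).2
  have hpos : ∀ i, 0 ≤ p i := fun i => le_trans hε₁.le (hpi i).1
  -- key per-subset bound
  have hkey : ∀ S ∈ F, ∏ i ∈ S, p i ≤ C := by
    intro S hS
    have hScard : r * M ≤ (S.card : ℝ) := (Finset.mem_filter.mp hS).2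
    have hcard : ((Sᶜ.card : ℝ)) ≤ (M : ℝ) * (1 - r) := by
      have h1 : Sᶜ.card = M - S.card := by
        simp [Finset.card_compl]
      have h2 : S.card ≤ M := by
        simpa using Finset.card_le_card (Finset.subset_univ S)
      rw [h1, Nat.cast_sub h2]
      nlinarith
    have h1 : ε₁ ^ ((M : ℝ) * (1 - r)) ≤ ∏ i ∈ Sᶜ, p i := by
      calc ε₁ ^ ((M : ℝ) * (1 - r)) ≤ ε₁ ^ ((Sᶜ.card : ℝ)) :=
            Real.rpow_le_rpow_of_exponent_ge hε₁ hε₁'.le hcard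
        _ = ε₁ ^ (Sᶜ.card) := Real.rpow_natCast _ _
        _ ≤ ∏ i ∈ Sᶜ, p i := by
            rw [← Finset.prod_const]
            exact Finset.prod_le_prod (fun i _ => hε₁.le) (fun i _ => (hpi i).1)
    have hpow : (0 : ℝ) < ε₁ ^ ((M : ℝ) * (1 - r)) := Real.rpow_pos_of_pos hε₁ _
    have hdiv : (1 / ε₁) ^ ((M : ℝ) * (1 - r)) = 1 / ε₁ ^ ((M : ℝ) * (1 - r)) := by
      rw [Real.div_rpow (by norm_num) hε₁.le, Real.one_rpow]
    rw [hC, hdiv, one_div, inv_mul_eq_div, le_div_iff₀ hpow,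
      ← Finset.prod_mul_prod_compl S p]
    exact mul_le_mul_of_nonneg_left h1 (Finset.prod_nonneg fun i _ => hpos i)
  -- measure bound
  have h2 : μ {ω | r * M ≤ ∑ i, (A i).indicator (fun _ => (1 : ℝ)) ω} ≤
      ∑ S ∈ F, μ (⋂ i ∈ S, A i) :=
    (measure_mono hsub).trans (measure_biUnion_finset_le F _)
  have hne : ∀ S ∈ F, μ (⋂ i ∈ S, A i) ≠ ⊤ := fun S _ => measure_ne_top μ _
  have h3 : (μ {ω | r * M ≤ ∑ i, (A i).indicator (fun _ => (1 : ℝ)) ω}).toReal ≤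
      ∑ S ∈ F, (μ (⋂ i ∈ S, A i)).toReal := by
    rw [← ENNReal.toReal_sum hne]
    exact ENNReal.toReal_mono (ENNReal.sum_ne_top.mpr hne) h2
  have h4 : ∀ S ∈ F, (μ (⋂ i ∈ S, A i)).toReal = ∏ i ∈ S, p i := by
    intro S _
    rw [hind.meas_biInter S, ENNReal.toReal_prod]
    exact Finset.prod_congr rfl fun i _ => hp i
  have hCnonneg : 0 ≤ C :=
    mul_nonneg (Real.rpow_nonneg (by positivity) _)
      (Finset.prod_nonneg fun i _ => hpos i)
  have h5 : ∑ S ∈ F, (μ (⋂ i ∈ S, A i)).toReal ≤ (2 : ℝ) ^ M * C := by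
    calc ∑ S ∈ F, (μ (⋂ i ∈ S, A i)).toReal ≤ ∑ _S ∈ F, C := by
          refine Finset.sum_le_sum fun S hS => ?_
          rw [h4 S hS]; exact hkey S hS
      _ = F.card * C := by rw [Finset.sum_const, nsmul_eq_mul]
      _ ≤ (2 : ℝ) ^ M * C := by
          refine mul_le_mul_of_nonneg_right ?_ hCnonneg
          have : F.card ≤ 2 ^ M := by
            calc F.card ≤ (Finset.univ : Finset (Finset (Fin M))).card :=
                  Finset.card_filter_le _ _
              _ = 2 ^ M := by simp
          exact_mod_cast this
  have := h3.trans h5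
  calc (μ {ω | r * M ≤ ∑ i, (A i).indicator (fun _ => (1 : ℝ)) ω}).toReal
      ≤ (2 : ℝ) ^ M * C := this
    _ = (1 / ε₁) ^ ((M : ℝ) * (1 - r)) * 2 ^ M * ∏ i, p i := by rw [hC]; ring
end

section
/- Let $b \in (0,1)$, $\beta \in (0,1)$, $m \ge 1$ an integer, and suppose $b \cdot 2^{(2-\beta)3m} \ge 2$. Let $\pi:\mathbb{N}\to(0,\infty)$ satisfy $\pi(2^d)/\pi(2^L) \le C_5 2^{\beta(L-d)}$ for $d \le L$ with $C_5 \ge 1$. Then for every $L \ge 1$, $\sum_{l=1}^{L} b^{l-1}\, 2^{2(3ml+m)}\, \pi(2^{3ml+m}) \le 2 C_5^2\, b^{-1}\, 2^{2(\beta - 2)m}\, 2^{2\cdot 3m(L+1)}\, \pi(2^{3m(L+1)})\, b^{L}$. -/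
open Finset

theorem stmt7 (b : ℝ) (hb : 0 < b) (hb1 : b < 1) (β : ℝ) (hβ : 0 < β) (hβ1 : β < 1)
    (m : ℕ) (hm : 1 ≤ m) (hbm : 2 ≤ b * 2 ^ ((2 - β) * 3 * (m : ℝ)))
    (C5 : ℝ) (hC5 : 1 ≤ C5) (π : ℕ → ℝ) (hπ : ∀ n, 0 < π n)
    (hles : ∀ d L : ℕ, d ≤ L → π (2 ^ d) / π (2 ^ L) ≤ C5 * 2 ^ (β * ((L : ℝ) - d)))
    (L : ℕ) (hL : 1 ≤ L) :
    ∑ l ∈ Finset.Icc 1 L, b ^ (l - 1) * (2 : ℝ) ^ (2 * (3 * m * l + m)) * π (2 ^ (3 * m * l + m)) ≤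
      2 * C5 ^ 2 * b⁻¹ * (2 : ℝ) ^ (2 * (β - 2) * (m : ℝ)) *
        (2 : ℝ) ^ (2 * (3 * m * (L + 1))) * π (2 ^ (3 * m * (L + 1))) * b ^ L := by
  have h2p : (0:ℝ) < 2 := by norm_num
  have hPpos : 0 < π (2 ^ (3 * m * (L + 1))) := hπ _
  set P := π (2 ^ (3 * m * (L + 1))) with hPdef
  have hxLdef : ∃ xL : ℝ, xL = 2 * (3 * (m:ℝ) * L + m) + β * (2 * m) := ⟨_, rfl⟩
  obtain ⟨xL, hxL⟩ := hxLdef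
  have hA : ∃ A : ℝ, A = C5 * P * (b ^ (L - 1) * (2:ℝ) ^ xL) := ⟨_, rfl⟩
  obtain ⟨A, hA⟩ := hA
  have hApos : 0 ≤ A := by
    rw [hA]
    have := Real.rpow_pos_of_pos h2p xL
    positivity
  have key : ∀ l ∈ Finset.Icc 1 L,
      b ^ (l - 1) * (2 : ℝ) ^ (2 * (3 * m * l + m)) * π (2 ^ (3 * m * l + m)) ≤
      A * (1/2 : ℝ) ^ (L - l) := by
    intro l hl
    obtain ⟨hl1, hlL⟩ := Finset.mem_Icc.mp hl
    have hdle : 3 * m * l + m ≤ 3 * m * (L + 1) := by nlinarith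
    have h1 : π (2 ^ (3 * m * l + m)) ≤
        C5 * (2:ℝ) ^ (β * (((3 * m * (L+1) : ℕ) : ℝ) - ((3 * m * l + m : ℕ) : ℝ))) * P := by
      have h := hles (3 * m * l + m) (3 * m * (L + 1)) hdle
      rw [div_le_iff₀ hPpos] at h
      exact h
    obtain ⟨xl, hxl⟩ : ∃ xl : ℝ, xl = 2 * ((3 * m * l + m : ℕ) : ℝ) +
        β * (((3 * m * (L+1) : ℕ) : ℝ) - ((3 * m * l + m : ℕ) : ℝ)) := ⟨_, rfl⟩
    have hee : ((2 * (3 * m * l + m) : ℕ) : ℝ) +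
        β * (((3 * m * (L+1) : ℕ) : ℝ) - ((3 * m * l + m : ℕ) : ℝ)) = xl := by
      rw [hxl]; push_cast; ring
    have hpow2 : (2 : ℝ) ^ (2 * (3 * m * l + m)) *
        (2:ℝ) ^ (β * (((3 * m * (L+1) : ℕ) : ℝ) - ((3 * m * l + m : ℕ) : ℝ))) = (2:ℝ) ^ xl := by
      rw [← Real.rpow_natCast (2:ℝ) (2 * (3 * m * l + m)), ← Real.rpow_add h2p, hee]
    have step1 : b ^ (l - 1) * (2 : ℝ) ^ (2 * (3 * m * l + m)) * π (2 ^ (3 * m * l + m)) ≤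
        C5 * P * (b ^ (l - 1) * (2:ℝ) ^ xl) := by
      have hnn : 0 ≤ b ^ (l - 1) * (2 : ℝ) ^ (2 * (3 * m * l + m)) := by positivity
      calc b ^ (l - 1) * (2 : ℝ) ^ (2 * (3 * m * l + m)) * π (2 ^ (3 * m * l + m))
          ≤ b ^ (l - 1) * (2 : ℝ) ^ (2 * (3 * m * l + m)) *
            (C5 * (2:ℝ) ^ (β * (((3 * m * (L+1) : ℕ) : ℝ) - ((3 * m * l + m : ℕ) : ℝ))) * P) :=
            mul_le_mul_of_nonneg_left h1 hnn
        _ = C5 * P * (b ^ (l - 1) * ((2 : ℝ) ^ (2 * (3 * m * l + m)) *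
            (2:ℝ) ^ (β * (((3 * m * (L+1) : ℕ) : ℝ) - ((3 * m * l + m : ℕ) : ℝ))))) := by ring
        _ = C5 * P * (b ^ (l - 1) * (2:ℝ) ^ xl) := by rw [hpow2]
    -- core geometric bound
    obtain ⟨k, hk⟩ : ∃ k : ℕ, k = L - l := ⟨_, rfl⟩
    have hkcast : ((k : ℕ) : ℝ) = (L : ℝ) - l := by
      rw [hk]; push_cast [hlL]; ring
    have hexp : xL = xl + ((2 - β) * 3 * (m:ℝ)) * k := by
      rw [hxL, hxl, hkcast]; push_cast; ring
    have hbase : (1:ℝ) ≤ (b * (2:ℝ) ^ ((2 - β) * 3 * (m : ℝ)) * (1/2)) ^ k := by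
      apply one_le_pow₀
      nlinarith
    have hfact : (b * (2:ℝ) ^ ((2 - β) * 3 * (m : ℝ)) * (1/2)) ^ k
        = b ^ k * (2:ℝ) ^ (((2 - β) * 3 * (m:ℝ)) * k) * (1/2:ℝ) ^ k := by
      rw [mul_pow, mul_pow]
      rw [← Real.rpow_natCast ((2:ℝ) ^ ((2 - β) * 3 * (m : ℝ))) k,
        ← Real.rpow_mul (le_of_lt h2p)]
    have h2 : b ^ (l - 1) * (2:ℝ) ^ xl ≤ b ^ (L - 1) * (2:ℝ) ^ xL * (1/2:ℝ) ^ k := by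
      have h3 : (1:ℝ) * (2:ℝ) ^ xl ≤
          (b ^ k * (2:ℝ) ^ (((2 - β) * 3 * (m:ℝ)) * k) * (1/2:ℝ) ^ k) * (2:ℝ) ^ xl := by
        apply mul_le_mul_of_nonneg_right _ (le_of_lt (Real.rpow_pos_of_pos h2p xl))
        rw [← hfact]; exact hbase
      calc b ^ (l - 1) * (2:ℝ) ^ xl = b ^ (l-1) * ((1:ℝ) * (2:ℝ) ^ xl) := by ring
        _ ≤ b ^ (l-1) * ((b ^ k * (2:ℝ) ^ (((2 - β) * 3 * (m:ℝ)) * k) * (1/2:ℝ) ^ k) * (2:ℝ) ^ xl) :=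
            mul_le_mul_of_nonneg_left h3 (by positivity)
        _ = (b ^ (l - 1) * b ^ k) * ((2:ℝ) ^ xl * (2:ℝ) ^ (((2 - β) * 3 * (m:ℝ)) * k)) * (1/2:ℝ) ^ k := by
            ring
        _ = b ^ (L - 1) * (2:ℝ) ^ xL * (1/2:ℝ) ^ k := by
            have hkL : (l - 1) + k = L - 1 := by omega
            rw [← pow_add, hkL, ← Real.rpow_add h2p, ← hexp]
    calc b ^ (l - 1) * (2 : ℝ) ^ (2 * (3 * m * l + m)) * π (2 ^ (3 * m * l + m))
        ≤ C5 * P * (b ^ (l - 1) * (2:ℝ) ^ xl) := step1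
      _ ≤ C5 * P * (b ^ (L - 1) * (2:ℝ) ^ xL * (1/2:ℝ) ^ k) := by
          apply mul_le_mul_of_nonneg_left h2
          positivity
      _ = A * (1/2:ℝ) ^ (L - l) := by rw [hA, hk]; ring
  have hsum2 : ∑ l ∈ Finset.Icc 1 L, ((1:ℝ)/2) ^ (L - l) ≤ 2 := by
    have he : ∑ l ∈ Finset.Icc 1 L, ((1:ℝ)/2) ^ (L - l)
        = ∑ i ∈ Finset.range L, ((1:ℝ)/2) ^ i := by
      rw [← Finset.Ico_add_one_right_eq_Icc, Finset.sum_Ico_eq_sum_range]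
      calc ∑ i ∈ Finset.range L, ((1:ℝ)/2) ^ (L - (1 + i))
          = ∑ i ∈ Finset.range L, ((1:ℝ)/2) ^ (L - 1 - i) := by
            apply Finset.sum_congr rfl; intro i _; congr 1; omega
        _ = ∑ i ∈ Finset.range L, ((1:ℝ)/2) ^ i := Finset.sum_range_reflect (fun i => ((1:ℝ)/2)^i) L
    rw [he]
    exact sum_geometric_two_le L
  have main : ∑ l ∈ Finset.Icc 1 L,
      b ^ (l - 1) * (2 : ℝ) ^ (2 * (3 * m * l + m)) * π (2 ^ (3 * m * l + m)) ≤ A * 2 := by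
    calc ∑ l ∈ Finset.Icc 1 L, b ^ (l - 1) * (2 : ℝ) ^ (2 * (3 * m * l + m)) * π (2 ^ (3 * m * l + m))
        ≤ ∑ l ∈ Finset.Icc 1 L, A * ((1:ℝ)/2) ^ (L - l) := Finset.sum_le_sum key
      _ = A * ∑ l ∈ Finset.Icc 1 L, ((1:ℝ)/2) ^ (L - l) := by rw [Finset.mul_sum]
      _ ≤ A * 2 := mul_le_mul_of_nonneg_left hsum2 hApos
  refine main.trans ?_
  have hrhs : 2 * C5 ^ 2 * b⁻¹ * (2 : ℝ) ^ (2 * (β - 2) * (m : ℝ)) *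
      (2 : ℝ) ^ (2 * (3 * m * (L + 1))) * P * b ^ L
      = 2 * C5 ^ 2 * P * (b ^ (L - 1) * (2:ℝ) ^ xL) := by
    have hbL : b⁻¹ * b ^ L = b ^ (L - 1) := by
      have h : b ^ L = b * b ^ (L - 1) := by
        rw [← pow_succ']; congr 1; omega
      rw [h, ← mul_assoc, inv_mul_cancel₀ (ne_of_gt hb), one_mul]
    have hee2 : 2 * (β - 2) * (m : ℝ) + ((2 * (3 * m * (L + 1)) : ℕ) : ℝ) = xL := by
      rw [hxL]; push_cast; ring
    have h2e : (2 : ℝ) ^ (2 * (β - 2) * (m : ℝ)) * (2 : ℝ) ^ (2 * (3 * m * (L + 1))) = (2:ℝ) ^ xL := by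
      rw [← Real.rpow_natCast (2:ℝ) (2 * (3 * m * (L + 1))), ← Real.rpow_add h2p, hee2]
    calc 2 * C5 ^ 2 * b⁻¹ * (2 : ℝ) ^ (2 * (β - 2) * (m : ℝ)) *
        (2 : ℝ) ^ (2 * (3 * m * (L + 1))) * P * b ^ L
        = 2 * C5 ^ 2 * P * ((b⁻¹ * b ^ L) *
          ((2 : ℝ) ^ (2 * (β - 2) * (m : ℝ)) * (2 : ℝ) ^ (2 * (3 * m * (L + 1))))) := by ring
      _ = 2 * C5 ^ 2 * P * (b ^ (L - 1) * (2:ℝ) ^ xL) := by rw [hbL, h2e]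
  rw [hrhs, hA]
  have hC52 : C5 ≤ C5 ^ 2 := by nlinarith
  have hpos : 0 ≤ P * (b ^ (L - 1) * (2:ℝ) ^ xL) := by
    have := Real.rpow_pos_of_pos h2p xL
    positivity
  nlinarith [mul_le_mul_of_nonneg_right hC52 hpos]
end

section
/- Let $(\Omega,\mathcal{F},\mathbf{P})$ be a probability space and suppose events $E$, $F$, $G$, $H$, and a finite family of nonnegative weights satisfy the factorization identities: $\mathbf{P}(E\cap H\cap F\cap G) = \sum_{i,j} a_i(F)\, P(i,j)\, b_j(E,G)$ and $\mathbf{P}(H\cap G) = \sum_{i',j'} a_{i'}\, P(i',j')\, b_{j'}(G)$, where $a_i(F), a_{i'}, b_j(E,G), b_{j'}(G) \ge 0$ and the kernel $P$ satisfies $P(i,j)P(i',j') \le C_{10}\, P(i,j')P(i',j)$ for all $i,i',j,j'$ with some $C_{10} \ge 1$. If also $\mathbf{P}(E \cap H \cap G) = \sum_{i',j} a_{i'} P(i',j) b_j(E,G)$ and $\mathbf{P}(H\cap F\cap G) = \sum_{i,j'} a_i(F) P(i,j') b_{j'}(G)$, then $\mathbf{P}(E\cap H\cap F\cap G)\,\mathbf{P}(H\cap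 G) \ge C_{10}^{-1}\, \mathbf{P}(E\cap H\cap G)\,\mathbf{P}(H\cap F\cap G)$. -/
open MeasureTheory Finset

theorem stmt18 {Ω : Type*} [MeasurableSpace Ω] (μ : Measure Ω) [IsProbabilityMeasure μ]
    {ι κ : Type*} [Fintype ι] [Fintype κ]
    (E F G H : Set Ω)
    (aF aP : ι → ℝ) (bEG bG : κ → ℝ) (K : ι → κ → ℝ) (C10 : ℝ) (hC10 : 1 ≤ C10)
    (haF : ∀ i, 0 ≤ aF i) (haP : ∀ i, 0 ≤ aP i)
    (hbEG : ∀ j, 0 ≤ bEG j) (hbG : ∀ j, 0 ≤ bG j) (hK : ∀ i j, 0 ≤ K i j)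
    (hker : ∀ i i' j j', K i j * K i' j' ≤ C10 * (K i j' * K i' j))
    (h1 : (μ (E ∩ H ∩ F ∩ G)).toReal = ∑ i, ∑ j, aF i * K i j * bEG j)
    (h2 : (μ (H ∩ G)).toReal = ∑ i, ∑ j, aP i * K i j * bG j)
    (h3 : (μ (E ∩ H ∩ G)).toReal = ∑ i, ∑ j, aP i * K i j * bEG j)
    (h4 : (μ (H ∩ F ∩ G)).toReal = ∑ i, ∑ j, aF i * K i j * bG j) :
    C10⁻¹ * ((μ (E ∩ H ∩ G)).toReal * (μ (H ∩ F ∩ G)).toReal) ≤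
      (μ (E ∩ H ∩ F ∩ G)).toReal * (μ (H ∩ G)).toReal := by
  have hC0 : (0:ℝ) < C10 := one_pos.trans_le hC10
  rw [h1, h2, h3, h4, inv_mul_le_iff₀ hC0]
  have expand : ∀ (u : ι → ℝ) (v : κ → ℝ) (w : ι → ℝ) (z : κ → ℝ),
      (∑ i, ∑ j, u i * K i j * v j) * (∑ i, ∑ j, w i * K i j * z j)
        = ∑ i, ∑ i', ∑ j, ∑ j', u i * K i j * v j * (w i' * K i' j' * z j') := by
    intro u v w z
    rw [Finset.sum_mul_sum]
    congr 1; ext i; congr 1; ext i'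
    rw [Finset.sum_mul_sum]
  rw [expand, expand, Finset.mul_sum, Finset.sum_comm]
  refine Finset.sum_le_sum fun i _ => ?_
  rw [Finset.mul_sum]
  refine Finset.sum_le_sum fun i' _ => ?_
  rw [Finset.mul_sum]
  refine Finset.sum_le_sum fun j _ => ?_
  rw [Finset.mul_sum]
  refine Finset.sum_le_sum fun j' _ => ?_
  have ht : 0 ≤ aF i * aP i' * bEG j * bG j' :=
    mul_nonneg (mul_nonneg (mul_nonneg (haF i) (haP i')) (hbEG j)) (hbG j')
  calc aP i' * K i' j * bEG j * (aF i * K i j' * bG j')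
      = (aF i * aP i' * bEG j * bG j') * (K i j' * K i' j) := by ring
    _ ≤ (aF i * aP i' * bEG j * bG j') * (C10 * (K i j * K i' j')) :=
        mul_le_mul_of_nonneg_left (hker i i' j' j) ht
    _ = C10 * (aF i * K i j * bEG j * (aP i' * K i' j' * bG j')) := by ring
end
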